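/- arXiv:2203.08908 — 10 statements merged into one kernel-verified Lean document; each statement's English description precedes it below -/
import Mathlib

section
/- Suppose p and q are Borel probability measures on ℝ^n, absolutely continuous with respect to Lebesgue measure, with density representatives ρ_p and ρ_q, and suppose there is a constant C > 1 such that 1/C < ρ_p(x) < C for every x ∈ supp(p) and ρ_p(x) = 0 for every x ∉ supp(p), and likewise 1/C < ρ_q(x) < C for every x ∈ supp(q) and ρ_q(x) = 0 for every x ∉ supp(q). Let f* be the optimal discriminator. Then D_△(p, q) = 0 if and only if D_△(f*♯p, f*♯q) = 0, where the latter divergence is computed for the pushforward measures on ℝ with the absolute-value metric. -/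
/-! Both divergences vanish exactly when each measure is concentrated on the support of the
other. If `p` is concentrated on `supp q`, then `p ≪ q`, because `p ≪ volume` and the density
of `q` is positive on `supp q`; absolute continuity survives pushforward, so `f*♯p` is
concentrated on `supp (f*♯q)`. Conversely, the density bounds give
`f* ≤ C² / (C² + 1) < 1` on `supp q`, whereas `f* = 1` on `supp p \ supp q`; so if `f*♯p`
lives on `supp (f*♯q) ⊆ Iic (C² / (C² + 1))`, then `p` gives no mass to `supp p \ supp q`.
The other half is the same argument for `1 - f*`, the discriminator with `p` and `q` swapped. -/

open MeasureTheory Metric Set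
open scoped ENNReal

noncomputable section

/-- The topological support of a Borel measure: the smallest closed set of full measure,
realized as the intersection of all closed sets whose complement is null. -/
def msupport {X : Type*} [TopologicalSpace X] [MeasurableSpace X] (μ : Measure X) : Set X :=
  ⋂₀ {S : Set X | IsClosed S ∧ μ Sᶜ = 0}

/-- The symmetric support difference (SSD) divergence
`D_△(p, q) = ∫ d(x, supp q) dp + ∫ d(x, supp p) dq` (valued in `ℝ≥0∞`). -/
def Dtri {X : Type*} [MeasurableSpace X] [PseudoMetricSpace X] (p q : Measure X) : ℝ≥0∞ :=
  (∫⁻ x, ENNReal.ofReal (infDist x (msupport q)) ∂p) +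
  (∫⁻ x, ENNReal.ofReal (infDist x (msupport p)) ∂q)

/-- The Wasserstein-1 distance: infimum of `∫ d(x, y) dγ` over couplings of `p` and `q`. -/
def DW {X : Type*} [MeasurableSpace X] [PseudoMetricSpace X] (p q : Measure X) : ℝ≥0∞ :=
  ⨅ γ ∈ {γ : Measure (X × X) | γ.map Prod.fst = p ∧ γ.map Prod.snd = q},
    ∫⁻ z, ENNReal.ofReal (dist z.1 z.2) ∂γ

/-- The β-admissible Wasserstein distance: infimum of `∫ d(x, y) dγ` over measures `γ`
whose first marginal is `p` and whose second marginal is `≤ (1 + β) • q`. -/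
def DWbeta {X : Type*} [MeasurableSpace X] [PseudoMetricSpace X]
    (β : ℝ) (p q : Measure X) : ℝ≥0∞ :=
  ⨅ γ ∈ {γ : Measure (X × X) |
      γ.map Prod.fst = p ∧ γ.map Prod.snd ≤ (ENNReal.ofReal (1 + β)) • q},
    ∫⁻ z, ENNReal.ofReal (dist z.1 z.2) ∂γ

/-- The symmetrized (β₁, β₂)-admissible Wasserstein distance. -/
def DWsym {X : Type*} [MeasurableSpace X] [PseudoMetricSpace X]
    (β₁ β₂ : ℝ) (p q : Measure X) : ℝ≥0∞ :=
  DWbeta β₁ p q + DWbeta β₂ q p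

open Filter Measure

theorem msupport_eq_support {X : Type*} [TopologicalSpace X] [MeasurableSpace X]
    (μ : Measure X) : msupport μ = μ.support :=
  μ.support_eq_sInter.symm

theorem lintegral_ofReal_infDist_eq_zero_iff {X : Type*} [PseudoMetricSpace X]
    [MeasurableSpace X] [OpensMeasurableSpace X] (μ : Measure X) {S : Set X}
    (hS : IsClosed S) (hne : S.Nonempty) :
    ∫⁻ x, ENNReal.ofReal (infDist x S) ∂μ = 0 ↔ S ∈ ae μ := by
  have hzero (x : X) : ENNReal.ofReal (infDist x S) = 0 ↔ x ∈ S := by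
    rw [ENNReal.ofReal_eq_zero, LE.le.ge_iff_eq' infDist_nonneg, hS.mem_iff_infDist_zero hne]
  rw [lintegral_eq_zero_iff (continuous_infDist_pt S).measurable.ennreal_ofReal]
  simp only [EventuallyEq, Pi.zero_apply, hzero]
  rfl

theorem Dtri_eq_zero_iff {X : Type*} [PseudoMetricSpace X] [HereditarilyLindelofSpace X]
    [MeasurableSpace X] [OpensMeasurableSpace X] (p q : Measure X) [NeZero p] [NeZero q] :
    Dtri p q = 0 ↔ q.support ∈ ae p ∧ p.support ∈ ae q := by
  rw [Dtri, add_eq_zero, msupport_eq_support, msupport_eq_support,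
    lintegral_ofReal_infDist_eq_zero_iff p isClosed_support (nonempty_support (NeZero.ne q)),
    lintegral_ofReal_infDist_eq_zero_iff q isClosed_support (nonempty_support (NeZero.ne p))]

section AbsolutelyContinuous

variable {X : Type*} [MeasurableSpace X]

theorem restrict_absolutelyContinuous_withDensity {μ : Measure X} {f : X → ℝ≥0∞}
    (hf : AEMeasurable f μ) {S : Set X} (hS : ∀ x ∈ S, f x ≠ 0) :
    μ.restrict S ≪ μ.withDensity f := by
  refine Measure.AbsolutelyContinuous.mk fun A hA hfA => ?_
  rw [withDensity_apply_eq_zero' hf] at hfA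
  rw [Measure.restrict_apply hA]
  refine measure_mono_null ?_ hfA
  exact fun x hx => ⟨hS x hx.2, hx.1⟩

theorem absolutelyContinuous_of_ae_mem {μ p q : Measure X} {S : Set X} (hpμ : p ≪ μ)
    (hμq : μ.restrict S ≪ q) (hS : S ∈ ae p) : p ≪ q := by
  rw [← Measure.restrict_eq_self_of_ae_mem hS]
  exact (hpμ.restrict S).trans hμq

end AbsolutelyContinuous

theorem support_mem_ae_iff_map {X Y : Type*} [MeasurableSpace X] [TopologicalSpace X]
    [HereditarilyLindelofSpace X] [MeasurableSpace Y] [TopologicalSpace Y]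
    [HereditarilyLindelofSpace Y] [OpensMeasurableSpace Y] {μ p q : Measure X} {f : X → Y}
    (hf : Measurable f) {K : Set Y} (hK : IsClosed K) (hpμ : p ≪ μ)
    (hμq : μ.restrict q.support ≪ q) (hqK : ∀ x ∈ q.support, f x ∈ K)
    (hpK : ∀ x ∈ p.support, f x ∈ K → x ∈ q.support) :
    q.support ∈ ae p ↔ (q.map f).support ∈ ae (p.map f) := by
  constructor
  · intro h
    exact ((absolutelyContinuous_of_ae_mem hpμ hμq h).map hf).ae_le (q.map f).support_mem_ae
  · intro h
    have hKq : K ∈ ae (q.map f) := (mem_ae_map_iff hf.aemeasurable hK.measurableSet).2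
      (mem_of_superset q.support_mem_ae hqK)
    have hKp : ∀ᵐ x ∂p, f x ∈ K :=
      ae_of_ae_map hf.aemeasurable (mem_of_superset h (support_subset_of_isClosed hK hKq))
    filter_upwards [hKp, p.support_mem_ae] with x hxK hxp using hpK x hxp hxK

def optimalDiscriminator (a b : ℝ) : ℝ :=
  if 0 < a + b then a / (a + b) else 1 / 2

theorem measurable_optimalDiscriminator :
    Measurable fun z : ℝ × ℝ => optimalDiscriminator z.1 z.2 :=
  Measurable.ite (measurableSet_lt measurable_const (measurable_fst.add measurable_snd))
    (measurable_fst.div (measurable_fst.add measurable_snd)) measurable_const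

theorem one_sub_optimalDiscriminator (a b : ℝ) :
    1 - optimalDiscriminator a b = optimalDiscriminator b a := by
  unfold optimalDiscriminator
  rw [add_comm b a]
  split_ifs
  · field_simp
    ring
  · norm_num

theorem optimalDiscriminator_zero_right {a : ℝ} (ha : 0 < a) : optimalDiscriminator a 0 = 1 := by
  simp [optimalDiscriminator, ha, ha.ne']

theorem optimalDiscriminator_le {a b C : ℝ} (hC : 0 < C) (ha : 0 ≤ a) (haC : a ≤ C)
    (hb : 1 / C ≤ b) : optimalDiscriminator a b ≤ C ^ 2 / (C ^ 2 + 1) := by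
  have hCb : 1 ≤ b * C := (div_le_iff₀ hC).1 hb
  have hb₀ : 0 < b := lt_of_lt_of_le (by positivity) hb
  rw [optimalDiscriminator, if_pos (by linarith), div_le_div_iff₀ (by linarith) (by positivity)]
  nlinarith

def IsBoundedDensity {X : Type*} (ρ : X → ℝ) (S : Set X) (C : ℝ) : Prop :=
  (∀ x ∈ S, 1 / C < ρ x ∧ ρ x < C) ∧ ∀ x ∉ S, ρ x = 0

namespace IsBoundedDensity

variable {X : Type*} {ρ σ : X → ℝ} {S T : Set X} {C : ℝ}

theorem pos (h : IsBoundedDensity ρ S C) (hC : 0 < C) {x : X} (hx : x ∈ S) : 0 < ρ x :=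
  (h.1 x hx).1.trans' (by positivity)

theorem mem_Icc (h : IsBoundedDensity ρ S C) (hC : 0 < C) (x : X) : ρ x ∈ Icc 0 C := by
  by_cases hx : x ∈ S
  · exact ⟨(h.pos hC hx).le, (h.1 x hx).2.le⟩
  · rw [h.2 x hx]
    exact ⟨le_rfl, hC.le⟩

theorem restrict_absolutelyContinuous [MeasurableSpace X] {μ p : Measure X}
    (h : IsBoundedDensity ρ S C) (hC : 0 < C) (hρ : Measurable ρ)
    (hp : p = μ.withDensity fun x => ENNReal.ofReal (ρ x)) : μ.restrict S ≪ p :=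
  hp ▸ restrict_absolutelyContinuous_withDensity hρ.ennreal_ofReal.aemeasurable
    fun _ hx => (ENNReal.ofReal_pos.2 (h.pos hC hx)).ne'

theorem optimalDiscriminator_le (hρ : IsBoundedDensity ρ S C) (hσ : IsBoundedDensity σ T C)
    (hC : 0 < C) {x : X} (hx : x ∈ T) :
    optimalDiscriminator (ρ x) (σ x) ≤ C ^ 2 / (C ^ 2 + 1) :=
  _root_.optimalDiscriminator_le hC (hρ.mem_Icc hC x).1 (hρ.mem_Icc hC x).2 (hσ.1 x hx).1.le

theorem mem_of_optimalDiscriminator_le (hρ : IsBoundedDensity ρ S C)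
    (hσ : IsBoundedDensity σ T C) (hC : 1 < C) {x : X} (hx : x ∈ S)
    (h : optimalDiscriminator (ρ x) (σ x) ≤ C ^ 2 / (C ^ 2 + 1)) : x ∈ T := by
  by_contra hxT
  rw [hσ.2 x hxT, optimalDiscriminator_zero_right (hρ.pos (by linarith) hx),
    le_div_iff₀ (by positivity)] at h
  linarith

end IsBoundedDensity

/-- **Theorem 1.** For densities bounded above and away from zero on the
supports, the optimal log-loss discriminator preserves support alignment:
`D_△(p, q) = 0` iff `D_△(f*♯p, f*♯q) = 0`. -/
theorem ssd_zero_iff_pushforward_ssd_zero (n : ℕ)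
    (p q : Measure (EuclideanSpace ℝ (Fin n)))
    [IsProbabilityMeasure p] [IsProbabilityMeasure q]
    (ρp ρq : EuclideanSpace ℝ (Fin n) → ℝ)
    (hρp_meas : Measurable ρp) (hρq_meas : Measurable ρq)
    (hp : p = volume.withDensity (fun x => ENNReal.ofReal (ρp x)))
    (hq : q = volume.withDensity (fun x => ENNReal.ofReal (ρq x)))
    (C : ℝ) (hC : 1 < C)
    (hρp_bound : ∀ x ∈ msupport p, 1 / C < ρp x ∧ ρp x < C)
    (hρp_zero : ∀ x ∉ msupport p, ρp x = 0)
    (hρq_bound : ∀ x ∈ msupport q, 1 / C < ρq x ∧ ρq x < C)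
    (hρq_zero : ∀ x ∉ msupport q, ρq x = 0)
    (fstar : EuclideanSpace ℝ (Fin n) → ℝ)
    (hfstar : ∀ x, fstar x =
      if 0 < ρp x + ρq x then ρp x / (ρp x + ρq x) else 1 / 2) :
    Dtri p q = 0 ↔ Dtri (p.map fstar) (q.map fstar) = 0 := by
  have hC₀ : 0 < C := one_pos.trans hC
  rw [msupport_eq_support] at hρp_bound hρp_zero hρq_bound hρq_zero
  have hρp : IsBoundedDensity ρp p.support C := ⟨hρp_bound, hρp_zero⟩
  have hρq : IsBoundedDensity ρq q.support C := ⟨hρq_bound, hρq_zero⟩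
  replace hfstar (x) : fstar x = optimalDiscriminator (ρp x) (ρq x) := hfstar x
  have hf : Measurable fstar := by
    rw [funext hfstar]
    exact measurable_optimalDiscriminator.comp (hρp_meas.prodMk hρq_meas)
  have := isProbabilityMeasure_map (μ := p) hf.aemeasurable
  have := isProbabilityMeasure_map (μ := q) hf.aemeasurable
  rw [Dtri_eq_zero_iff, Dtri_eq_zero_iff]
  have hpμ : p ≪ volume := hp ▸ withDensity_absolutelyContinuous _ _
  have hqμ : q ≪ volume := hq ▸ withDensity_absolutelyContinuous _ _
  set t := C ^ 2 / (C ^ 2 + 1)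
  refine and_congr
    (support_mem_ae_iff_map hf (isClosed_Iic (a := t)) hpμ
      (hρq.restrict_absolutelyContinuous hC₀ hρq_meas hq) (fun x hx => ?_) fun x hx hxK => ?_)
    (support_mem_ae_iff_map hf (isClosed_Ici (a := 1 - t)) hqμ
      (hρp.restrict_absolutelyContinuous hC₀ hρp_meas hp) (fun x hx => ?_) fun x hx hxK => ?_)
  · rw [mem_Iic, hfstar]
    exact hρp.optimalDiscriminator_le hρq hC₀ hx
  · rw [mem_Iic, hfstar] at hxK
    exact hρp.mem_of_optimalDiscriminator_le hρq hC hx hxK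
  · rw [mem_Ici, hfstar, sub_le_comm, one_sub_optimalDiscriminator]
    exact hρq.optimalDiscriminator_le hρp hC₀ hx
  · rw [mem_Ici, hfstar, sub_le_comm, one_sub_optimalDiscriminator] at hxK
    exact hρq.mem_of_optimalDiscriminator_le hρp hC hx hxK
end
end

section
/- Suppose p and q are Borel probability measures on ℝ^n, absolutely continuous with respect to Lebesgue measure, with density representatives ρ_p and ρ_q, and suppose there is a constant C > 1 such that 1/C < ρ_p(x) < C for every x ∈ supp(p) and ρ_p(x) = 0 for every x ∉ supp(p), and likewise 1/C < ρ_q(x) < C for every x ∈ supp(q) and ρ_q(x) = 0 for every x ∉ supp(q). Let f* be the optimal discriminator. Then (i) for every α with 0 < α < 1/(C² + 1), the pushforward measure f*♯q assigns measure zero to the interval (1 − α, 1], and (ii) (f*♯p)({1}) = p(supp(p) \ supp(q)). -/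
/-!
Where `ρ_q > 0` we are on `supp q`, so `ρ_q > 1/C` while `ρ_p < C`; then
`α ρ_p < α C ≤ (1 - α)/C < (1 - α) ρ_q` forces `f* ≤ 1 - α`, and the density of `q` vanishes on
`f*⁻¹ (1 - α, 1]`. Moreover `f* = 1` exactly where `ρ_p > 0 = ρ_q`, i.e. on `supp p \ supp q`.
-/

open MeasureTheory Metric Set
open scoped ENNReal

noncomputable section

def discriminator (a b : ℝ) : ℝ :=
  if 0 < a + b then a / (a + b) else 1 / 2

theorem Measurable.discriminator {X : Type*} [MeasurableSpace X] {f g : X → ℝ}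
    (hf : Measurable f) (hg : Measurable g) :
    Measurable fun x => _root_.discriminator (f x) (g x) :=
  Measurable.ite (measurableSet_lt measurable_const (hf.add hg)) (hf.div (hf.add hg))
    measurable_const

theorem discriminator_eq_one_iff {a b : ℝ} :
    discriminator a b = 1 ↔ 0 < a ∧ b = 0 := by
  unfold discriminator
  split_ifs with hab
  · rw [div_eq_one_iff_eq hab.ne']
    constructor
    · intro h
      constructor <;> linarith
    · rintro ⟨-, rfl⟩
      ring
  · exact ⟨by norm_num, fun ⟨ha, hb⟩ => absurd (by linarith) hab⟩

theorem discriminator_le_one_sub {a b C α : ℝ} (ha : 0 ≤ a) (haC : a < C) (hb : 1 / C < b)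
    (hαC : α * (C ^ 2 + 1) ≤ 1) :
    discriminator a b ≤ 1 - α := by
  have hC : 0 < C := ha.trans_lt haC
  have hb0 : 0 < b := (one_div_pos.mpr hC).trans hb
  have hCb : 1 < C * b := by rwa [div_lt_iff₀' hC] at hb
  have hab : 0 < a + b := by linarith
  rw [discriminator, if_pos hab, div_le_iff₀ hab]
  rcases le_or_gt 0 α with hα | hα
  · nlinarith [mul_le_mul_of_nonneg_left haC.le hα]
  · nlinarith

structure IsBoundedDensityOn {X : Type*} (ρ : X → ℝ) (S : Set X) (C : ℝ) : Prop where
  bounds : ∀ x ∈ S, 1 / C < ρ x ∧ ρ x < C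
  eq_zero : ∀ x ∉ S, ρ x = 0

namespace IsBoundedDensityOn

variable {X : Type*} {ρ : X → ℝ} {S : Set X} {C : ℝ}

theorem pos_iff (h : IsBoundedDensityOn ρ S C) (hC : 0 < C) (x : X) : 0 < ρ x ↔ x ∈ S :=
  ⟨fun hx => by_contra fun hxS => hx.ne' (h.eq_zero x hxS),
    fun hxS => (one_div_pos.mpr hC).trans (h.bounds x hxS).1⟩

theorem nonneg (h : IsBoundedDensityOn ρ S C) (hC : 0 < C) (x : X) : 0 ≤ ρ x := by
  by_cases hx : x ∈ S
  · exact ((h.pos_iff hC x).mpr hx).le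
  · exact (h.eq_zero x hx).ge

theorem lt (h : IsBoundedDensityOn ρ S C) (hC : 0 < C) (x : X) : ρ x < C := by
  by_cases hx : x ∈ S
  · exact (h.bounds x hx).2
  · rwa [h.eq_zero x hx]

end IsBoundedDensityOn

theorem pushforward_extreme_values_general (n : ℕ)
    (p q : Measure (EuclideanSpace ℝ (Fin n)))
    (ρp ρq : EuclideanSpace ℝ (Fin n) → ℝ)
    (hρp_meas : Measurable ρp) (hρq_meas : Measurable ρq)
    (hq : q = volume.withDensity (fun x => ENNReal.ofReal (ρq x)))
    (C : ℝ) (hC : 1 < C)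
    (hρp_bound : ∀ x ∈ msupport p, 1 / C < ρp x ∧ ρp x < C)
    (hρp_zero : ∀ x ∉ msupport p, ρp x = 0)
    (hρq_bound : ∀ x ∈ msupport q, 1 / C < ρq x ∧ ρq x < C)
    (hρq_zero : ∀ x ∉ msupport q, ρq x = 0)
    (fstar : EuclideanSpace ℝ (Fin n) → ℝ)
    (hfstar : ∀ x, fstar x =
      if 0 < ρp x + ρq x then ρp x / (ρp x + ρq x) else 1 / 2) :
    (∀ α : ℝ, 0 < α → α < 1 / (C ^ 2 + 1) →
      (q.map fstar) (Set.Ioc (1 - α) 1) = 0) ∧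
    (p.map fstar) {1} = p (msupport p \ msupport q) := by
  have hC0 : 0 < C := one_pos.trans hC
  have hρp : IsBoundedDensityOn ρp (msupport p) C := ⟨hρp_bound, hρp_zero⟩
  have hρq : IsBoundedDensityOn ρq (msupport q) C := ⟨hρq_bound, hρq_zero⟩
  have hf : fstar = fun x => discriminator (ρp x) (ρq x) := funext hfstar
  have hf_meas : Measurable fstar := hf ▸ hρp_meas.discriminator hρq_meas
  refine ⟨fun α _ hαC => ?_, ?_⟩
  · have hαC' : α * (C ^ 2 + 1) ≤ 1 := ((lt_div_iff₀ (by positivity)).mp hαC).le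
    rw [Measure.map_apply hf_meas measurableSet_Ioc, hq,
      withDensity_apply _ (hf_meas measurableSet_Ioc)]
    refine setLIntegral_eq_zero (hf_meas measurableSet_Ioc) fun x hx => ?_
    have hx_supp : x ∉ msupport q := fun hxq => (hx.1.trans_le (hf ▸ discriminator_le_one_sub
      (hρp.nonneg hC0 x) (hρp.lt hC0 x) (hρq_bound x hxq).1 hαC')).false
    simp [hρq_zero x hx_supp]
  · rw [Measure.map_apply hf_meas (measurableSet_singleton 1)]
    congr 1
    ext x
    simp only [hf, mem_preimage, mem_singleton_iff, mem_sdiff,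
      discriminator_eq_one_iff, hρp.pos_iff hC0,
      ← hρq.pos_iff hC0, (hρq.nonneg hC0 x).ge_iff_eq', not_lt]

/-- With bounded densities: (i) the pushforward of `q` under the optimal
discriminator puts no mass on `(1 − α, 1]` for `0 < α < 1/(C² + 1)`; and
(ii) `(f*♯p)({1}) = p(supp p \ supp q)`. -/
theorem pushforward_extreme_values (n : ℕ)
    (p q : Measure (EuclideanSpace ℝ (Fin n)))
    [IsProbabilityMeasure p] [IsProbabilityMeasure q]
    (ρp ρq : EuclideanSpace ℝ (Fin n) → ℝ)
    (hρp_meas : Measurable ρp) (hρq_meas : Measurable ρq)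
    (hp : p = volume.withDensity (fun x => ENNReal.ofReal (ρp x)))
    (hq : q = volume.withDensity (fun x => ENNReal.ofReal (ρq x)))
    (C : ℝ) (hC : 1 < C)
    (hρp_bound : ∀ x ∈ msupport p, 1 / C < ρp x ∧ ρp x < C)
    (hρp_zero : ∀ x ∉ msupport p, ρp x = 0)
    (hρq_bound : ∀ x ∈ msupport q, 1 / C < ρq x ∧ ρq x < C)
    (hρq_zero : ∀ x ∉ msupport q, ρq x = 0)
    (fstar : EuclideanSpace ℝ (Fin n) → ℝ)
    (hfstar : ∀ x, fstar x =
      if 0 < ρp x + ρq x then ρp x / (ρp x + ρq x) else 1 / 2) :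
    (∀ α : ℝ, 0 < α → α < 1 / (C ^ 2 + 1) →
      (q.map fstar) (Set.Ioc (1 - α) 1) = 0) ∧
    (p.map fstar) {1} = p (msupport p \ msupport q) :=
  pushforward_extreme_values_general n p q ρp ρq hρp_meas hρq_meas hq C hC hρp_bound hρp_zero
    hρq_bound hρq_zero fstar hfstar
end
end

section
/- There exist compactly supported Borel probability measures p and q on ℝ and a function f: ℝ → ℝ with Lipschitz constant at most 1 such that: (i) f maximizes the Kantorovich dual objective, i.e. ∫ g dp − ∫ g dq ≤ ∫ f dp − ∫ f dq for every g: ℝ → ℝ with Lipschitz constant at most 1; (ii) supp(p) ≠ supp(q); and (iii) supp(f♯p) = supp(f♯q). -/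
open MeasureTheory Metric Set
open scoped ENNReal

noncomputable section

lemma my_msupport_eq {μ : Measure ℝ} {A : Set ℝ} (hA : A.Finite) (h0 : μ Aᶜ = 0)
    (h1 : ∀ a ∈ A, μ {a} ≠ 0) : msupport μ = A := by
  apply subset_antisymm
  · exact sInter_subset_of_mem ⟨hA.isClosed, h0⟩
  · intro a ha
    rw [msupport, mem_sInter]
    rintro S ⟨hSc, hS0⟩
    by_contra h
    exact h1 a ha (measure_mono_null (singleton_subset_iff.2 h) hS0)

lemma my_integrable_dirac {g : ℝ → ℝ} (hg : Continuous g) (a : ℝ) :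
    Integrable g (Measure.dirac a) := by
  refine ⟨hg.aestronglyMeasurable, ?_⟩
  rw [HasFiniteIntegral, lintegral_dirac]
  exact ENNReal.coe_lt_top

lemma my_integral_three {g : ℝ → ℝ} (hg : Continuous g) (a₁ a₂ a₃ : ℝ) (c₁ c₂ c₃ : ℝ) :
    ∫ x, g x ∂(ENNReal.ofReal c₁ • Measure.dirac a₁ + ENNReal.ofReal c₂ • Measure.dirac a₂
      + ENNReal.ofReal c₃ • Measure.dirac a₃)
      = (ENNReal.ofReal c₁).toReal * g a₁ + (ENNReal.ofReal c₂).toReal * g a₂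
        + (ENNReal.ofReal c₃).toReal * g a₃ := by
  rw [integral_add_measure, integral_add_measure, integral_smul_measure, integral_smul_measure,
    integral_smul_measure, integral_dirac, integral_dirac, integral_dirac]
  · simp [smul_eq_mul]
  · exact (my_integrable_dirac hg a₁).smul_measure ENNReal.ofReal_ne_top
  · exact (my_integrable_dirac hg a₂).smul_measure ENNReal.ofReal_ne_top
  · exact ((my_integrable_dirac hg a₁).smul_measure ENNReal.ofReal_ne_top).add_measure
      ((my_integrable_dirac hg a₂).smul_measure ENNReal.ofReal_ne_top)
  · exact (my_integrable_dirac hg a₃).smul_measure ENNReal.ofReal_ne_top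

/-- **Proposition 2.** There are compactly supported probability measures on ℝ
with different supports and a maximizer `f` of the Kantorovich dual objective over 1-Lipschitz
functions such that the pushforwards `f♯p` and `f♯q` have equal supports. -/
theorem wasserstein_discriminator_counterexample :
    ∃ p q : Measure ℝ, IsProbabilityMeasure p ∧ IsProbabilityMeasure q ∧
      IsCompact (msupport p) ∧ IsCompact (msupport q) ∧
      ∃ f : ℝ → ℝ, LipschitzWith 1 f ∧
        (∀ g : ℝ → ℝ, LipschitzWith 1 g →
          (∫ x, g x ∂p) - (∫ x, g x ∂q) ≤ (∫ x, f x ∂p) - (∫ x, f x ∂q)) ∧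
        msupport p ≠ msupport q ∧
        msupport (p.map f) = msupport (q.map f) := by
  set p : Measure ℝ := ENNReal.ofReal (1/2) • Measure.dirac 0
    + ENNReal.ofReal (1/4) • Measure.dirac 1 + ENNReal.ofReal (1/4) • Measure.dirac 3 with hp
  set q : Measure ℝ := ENNReal.ofReal (1/4) • Measure.dirac 0
    + ENNReal.ofReal (1/2) • Measure.dirac 1 + ENNReal.ofReal (1/4) • Measure.dirac 2 with hq
  set f : ℝ → ℝ := fun x => max (1 - x) (max 0 (x - 2)) with hf
  have hfc : LipschitzWith 1 f := by
    have l1 : LipschitzWith 1 (fun x : ℝ => 1 - x) := by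
      simpa using (LipschitzWith.const (1 : ℝ)).sub LipschitzWith.id
    have l2 : LipschitzWith 1 (fun x : ℝ => x - 2) := by
      simpa using LipschitzWith.id.sub (LipschitzWith.const (2 : ℝ))
    have l3 : LipschitzWith 1 (fun x : ℝ => max 0 (x - 2)) := by
      simpa using (LipschitzWith.const (0 : ℝ)).max l2
    simpa using l1.max l3
  have hfm : Measurable f := hfc.continuous.measurable
  have hf0 : f 0 = 1 := by norm_num [hf]
  have hf1 : f 1 = 0 := by norm_num [hf]
  have hf2 : f 2 = 0 := by norm_num [hf]
  have hf3 : f 3 = 1 := by norm_num [hf]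
  have hsp : msupport p = {0, 1, 3} := by
    apply my_msupport_eq (Set.toFinite _)
    · simp [hp, Measure.dirac_apply, indicator_apply]
    · intro a ha
      simp only [mem_insert_iff, mem_singleton_iff] at ha
      rcases ha with rfl | rfl | rfl <;>
        simp [hp, Measure.dirac_apply, indicator_apply]
  have hsq : msupport q = {0, 1, 2} := by
    apply my_msupport_eq (Set.toFinite _)
    · simp [hq, Measure.dirac_apply, indicator_apply]
    · intro a ha
      simp only [mem_insert_iff, mem_singleton_iff] at ha
      rcases ha with rfl | rfl | rfl <;>
        simp [hq, Measure.dirac_apply, indicator_apply]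
  have hpmap : p.map f = ENNReal.ofReal (1/2) • Measure.dirac (f 0)
      + ENNReal.ofReal (1/4) • Measure.dirac (f 1) + ENNReal.ofReal (1/4) • Measure.dirac (f 3) := by
    rw [hp, Measure.map_add _ _ hfm, Measure.map_add _ _ hfm, Measure.map_smul,
      Measure.map_smul, Measure.map_smul, Measure.map_dirac' hfm, Measure.map_dirac' hfm,
      Measure.map_dirac' hfm]
  have hqmap : q.map f = ENNReal.ofReal (1/4) • Measure.dirac (f 0)
      + ENNReal.ofReal (1/2) • Measure.dirac (f 1) + ENNReal.ofReal (1/4) • Measure.dirac (f 2) := by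
    rw [hq, Measure.map_add _ _ hfm, Measure.map_add _ _ hfm, Measure.map_smul,
      Measure.map_smul, Measure.map_smul, Measure.map_dirac' hfm, Measure.map_dirac' hfm,
      Measure.map_dirac' hfm]
  refine ⟨p, q, ?_, ?_, ?_, ?_, f, hfc, ?_, ?_, ?_⟩
  · constructor
    rw [hp]
    simp only [Measure.add_apply, Measure.smul_apply, Measure.dirac_apply, smul_eq_mul,
      indicator_apply, mem_univ, if_pos, Pi.one_apply, mul_one]
    rw [← ENNReal.ofReal_add (by norm_num) (by norm_num),
      ← ENNReal.ofReal_add (by norm_num) (by norm_num)]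
    norm_num
  · constructor
    rw [hq]
    simp only [Measure.add_apply, Measure.smul_apply, Measure.dirac_apply, smul_eq_mul,
      indicator_apply, mem_univ, if_pos, Pi.one_apply, mul_one]
    rw [← ENNReal.ofReal_add (by norm_num) (by norm_num),
      ← ENNReal.ofReal_add (by norm_num) (by norm_num)]
    norm_num
  · rw [hsp]; exact (Set.toFinite _).isCompact
  · rw [hsq]; exact (Set.toFinite _).isCompact
  · intro g hg
    rw [my_integral_three hg.continuous, my_integral_three hg.continuous,
      my_integral_three hfc.continuous, my_integral_three hfc.continuous,
      hf0, hf1, hf2, hf3]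
    have h01 : |g 0 - g 1| ≤ 1 := by
      have := hg.dist_le_mul 0 1
      rw [Real.dist_eq, Real.dist_eq] at this
      simpa using this
    have h32 : |g 3 - g 2| ≤ 1 := by
      have := hg.dist_le_mul 3 2
      rw [Real.dist_eq, Real.dist_eq] at this
      norm_num at this
      exact this
    rw [ENNReal.toReal_ofReal (by norm_num), ENNReal.toReal_ofReal (by norm_num)]
    have := abs_le.1 h01
    have := abs_le.1 h32
    nlinarith [this.1, this.2]
  · rw [hsp, hsq]
    intro h
    have h3 : (3 : ℝ) ∈ ({0, 1, 2} : Set ℝ) := h ▸ (by norm_num : (3:ℝ) ∈ ({0,1,3} : Set ℝ))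
    norm_num at h3
  · rw [hpmap, hqmap, hf0, hf1, hf2, hf3]
    rw [my_msupport_eq (A := {0, 1}) (Set.toFinite _), my_msupport_eq (A := {0, 1}) (Set.toFinite _)]
    · simp [Measure.dirac_apply, indicator_apply]
    · intro a ha
      simp only [mem_insert_iff, mem_singleton_iff] at ha
      rcases ha with rfl | rfl <;>
        simp [Measure.dirac_apply, indicator_apply]
    · simp [Measure.dirac_apply, indicator_apply]
    · intro a ha
      simp only [mem_insert_iff, mem_singleton_iff] at ha
      rcases ha with rfl | rfl <;>
        simp [Measure.dirac_apply, indicator_apply]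
end
end

section
/- Let p and q be Borel probability measures on ℝ^n and let β > 0. Then the β-admissible Wasserstein distance satisfies D_W^β(p, q) = 0 if and only if p(A) ≤ (1 + β)·q(A) for every Borel set A ⊆ ℝ^n. -/
open MeasureTheory Metric Set
open scoped ENNReal

noncomputable section

/-! If `p ≤ (1 + β) q`, the diagonal plan `x ↦ (x, x)` is admissible and costs nothing.
Conversely, if `(1 + β) q A < p A`, inner regularity of `p` and outer regularity of `q` give a
compact `K ⊆ A` and an open `U ⊇ K` with `(1 + β) q U < p K`, and `U` contains a
`δ`-thickening of `K`. Any admissible plan must carry mass at least `p K - (1 + β) q U` from `K`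
out of `U`, hence over distance at least `δ`, so its cost is bounded below by a positive constant.
-/

lemma tsub_le_measure_prod_compl {X : Type*} [MeasurableSpace X] {γ : Measure (X × X)}
    {p ν : Measure X} (hfst : γ.map Prod.fst = p) (hsnd : γ.map Prod.snd ≤ ν) {K U : Set X}
    (hK : MeasurableSet K) (hU : MeasurableSet U) :
    p K - ν U ≤ γ (K ×ˢ Uᶜ) := by
  have hcover : Prod.fst ⁻¹' K ⊆ Prod.snd ⁻¹' U ∪ K ×ˢ Uᶜ := by
    rintro ⟨x, y⟩ hx
    by_cases hy : y ∈ U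
    · exact Or.inl hy
    · exact Or.inr ⟨hx, hy⟩
  rw [tsub_le_iff_left]
  calc p K = γ (Prod.fst ⁻¹' K) := by rw [← hfst, Measure.map_apply measurable_fst hK]
    _ ≤ γ (Prod.snd ⁻¹' U) + γ (K ×ˢ Uᶜ) := (measure_mono hcover).trans (measure_union_le _ _)
    _ ≤ ν U + γ (K ×ˢ Uᶜ) := by
      gcongr
      rw [← Measure.map_apply measurable_snd hU]
      exact hsnd U

section PseudoMetric

variable {X : Type*} [PseudoMetricSpace X] [MeasurableSpace X]

lemma ofReal_mul_tsub_le_lintegral_dist {γ : Measure (X × X)} {p ν : Measure X}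
    (hfst : γ.map Prod.fst = p) (hsnd : γ.map Prod.snd ≤ ν) {K U : Set X} {δ : ℝ}
    (hK : MeasurableSet K) (hU : MeasurableSet U) (hKU : thickening δ K ⊆ U) :
    ENNReal.ofReal δ * (p K - ν U) ≤ ∫⁻ z, ENNReal.ofReal (dist z.1 z.2) ∂γ := by
  have hS : MeasurableSet (K ×ˢ Uᶜ) := hK.prod hU.compl
  have hdist : ∀ z ∈ K ×ˢ Uᶜ, δ ≤ dist z.1 z.2 := by
    rintro ⟨x, y⟩ ⟨hx, hy⟩
    by_contra! hxy
    exact hy (hKU (mem_thickening_iff.2 ⟨x, hx, by rwa [dist_comm]⟩))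
  calc ENNReal.ofReal δ * (p K - ν U)
      ≤ ENNReal.ofReal δ * γ (K ×ˢ Uᶜ) := by
        gcongr
        exact tsub_le_measure_prod_compl hfst hsnd hK hU
    _ = ∫⁻ z, (K ×ˢ Uᶜ).indicator (fun _ ↦ ENNReal.ofReal δ) z ∂γ :=
      (lintegral_indicator_const hS _).symm
    _ ≤ ∫⁻ z, ENNReal.ofReal (dist z.1 z.2) ∂γ := by
      refine lintegral_mono fun z ↦ ?_
      by_cases hz : z ∈ K ×ˢ Uᶜ
      · simpa [indicator_of_mem hz] using ENNReal.ofReal_le_ofReal (hdist z hz)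
      · simp [indicator_of_notMem hz]

lemma lintegral_dist_map_diag_eq_zero (μ : Measure X) :
    ∫⁻ z, ENNReal.ofReal (dist z.1 z.2) ∂(μ.map fun x ↦ (x, x)) = 0 :=
  le_antisymm ((lintegral_map_le _ _).trans_eq (by simp)) bot_le

end PseudoMetric

section Metric

variable {X : Type*} [MetricSpace X] [MeasurableSpace X] [OpensMeasurableSpace X]

lemma exists_pos_forall_le_lintegral_dist {p ν : Measure X} [p.InnerRegularCompactLTTop]
    [ν.OuterRegular] {A : Set X} (hA : MeasurableSet A) (hpA : p A ≠ ∞) (hlt : ν A < p A) :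
    ∃ ε > 0, ∀ γ : Measure (X × X), γ.map Prod.fst = p → γ.map Prod.snd ≤ ν →
      ε ≤ ∫⁻ z, ENNReal.ofReal (dist z.1 z.2) ∂γ := by
  obtain ⟨K, hKA, hK, hνK⟩ := hA.exists_lt_isCompact_of_ne_top hpA hlt
  obtain ⟨U, hKU, hU, hνU⟩ :=
    exists_isOpen_lt_of_lt (μ := ν) K (p K) ((measure_mono hKA).trans_lt hνK)
  obtain ⟨δ, hδ, hthick⟩ := hK.exists_thickening_subset_open hU hKU
  refine ⟨ENNReal.ofReal δ * (p K - ν U), ?_, fun γ hfst hsnd ↦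
    ofReal_mul_tsub_le_lintegral_dist hfst hsnd hK.measurableSet hU.measurableSet hthick⟩
  exact ENNReal.mul_pos (ENNReal.ofReal_pos.2 hδ).ne' (tsub_pos_of_lt hνU).ne'

theorem DWbeta_eq_zero_iff_le (β : ℝ) (p q : Measure X) [IsFiniteMeasure p]
    [p.InnerRegularCompactLTTop] [q.OuterRegular] :
    DWbeta β p q = 0 ↔ p ≤ ENNReal.ofReal (1 + β) • q := by
  constructor
  · intro h0
    by_contra hpq
    obtain ⟨A, hA, hlt⟩ : ∃ A, MeasurableSet A ∧ (ENNReal.ofReal (1 + β) • q) A < p A := by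
      simpa [Measure.le_iff] using hpq
    have := Measure.OuterRegular.smul q (ENNReal.ofReal_ne_top (r := 1 + β))
    obtain ⟨ε, hε, hbound⟩ := exists_pos_forall_le_lintegral_dist hA (measure_ne_top p A) hlt
    have : ε ≤ DWbeta β p q := le_iInf₂ fun γ hγ ↦ hbound γ hγ.1 hγ.2
    exact hε.ne' (le_antisymm (h0 ▸ this) bot_le)
  · intro hpq
    refine le_antisymm ?_ bot_le
    calc DWbeta β p q ≤ ∫⁻ z, ENNReal.ofReal (dist z.1 z.2) ∂(p.map fun x ↦ (x, x)) :=
          iInf₂_le _ ⟨(Measure.fst_map_prodMk measurable_id).trans p.map_id,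
            ((Measure.snd_map_prodMk measurable_id).trans p.map_id).trans_le hpq⟩
      _ = 0 := lintegral_dist_map_diag_eq_zero p

end Metric

theorem beta_admissible_zero_iff_general (n : ℕ) (β : ℝ)
    (p q : Measure (EuclideanSpace ℝ (Fin n)))
    [IsProbabilityMeasure p] [IsProbabilityMeasure q] :
    DWbeta β p q = 0 ↔
      ∀ A : Set (EuclideanSpace ℝ (Fin n)), MeasurableSet A →
        p A ≤ ENNReal.ofReal (1 + β) * q A := by
  rw [DWbeta_eq_zero_iff_le, Measure.le_iff]
  simp only [Measure.smul_apply, smul_eq_mul]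

/-- The β-admissible Wasserstein distance vanishes iff
`p(A) ≤ (1 + β) q(A)` for every Borel set `A`. -/
theorem beta_admissible_zero_iff (n : ℕ) (β : ℝ) (hβ : 0 < β)
    (p q : Measure (EuclideanSpace ℝ (Fin n)))
    [IsProbabilityMeasure p] [IsProbabilityMeasure q] :
    DWbeta β p q = 0 ↔
      ∀ A : Set (EuclideanSpace ℝ (Fin n)), MeasurableSet A →
        p A ≤ ENNReal.ofReal (1 + β) * q A :=
  beta_admissible_zero_iff_general n β p q
end
end

section
/- Let p and q be Borel probability measures on ℝ^n. If D_W^{β1,β2}(p, q) = 0 for some finite β1, β2 > 0, then D_△(p, q) = 0; equivalently, supp(p) = supp(q). -/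
open MeasureTheory Metric Set
open scoped ENNReal

noncomputable section

/-! A plan `γ` for `DWbeta β μ ν` has second marginal dominated by a multiple
of `ν`, so `γ`-almost every pair `(x, y)` has `y ∈ supp ν` and `d(x, y) ≥ d(x, supp ν)`.
Integrating, `∫ d(x, supp ν) dμ ≤ DWbeta β μ ν` for every `β`. Hence `DWsym = 0` forces both
halves of `D_△` to vanish, and `∫ d(x, supp q) dp = 0` puts `p`-almost every point in the
closed set `supp q`, i.e. `supp p ⊆ supp q`; symmetrically `supp q ⊆ supp p`. -/

section Support

variable {X : Type*} [TopologicalSpace X] [MeasurableSpace X]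

lemma isClosed_msupport (μ : Measure X) : IsClosed (msupport μ) :=
  isClosed_sInter fun _ hS => hS.1

lemma msupport_subset_of_isClosed {μ : Measure X} {S : Set X} (hS : IsClosed S)
    (hμS : μ Sᶜ = 0) : msupport μ ⊆ S :=
  sInter_subset_of_mem ⟨hS, hμS⟩

/-- Second countability reduces the union of the null open sets to a countable one. -/
lemma measure_compl_msupport [SecondCountableTopology X] (μ : Measure X) :
    μ (msupport μ)ᶜ = 0 := by
  have hcompl : (msupport μ)ᶜ = ⋃₀ (compl '' {S : Set X | IsClosed S ∧ μ Sᶜ = 0}) := by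
    simp [msupport, compl_sInter, sUnion_image]
  obtain ⟨T, hT, hTsub, hTeq⟩ := TopologicalSpace.isOpen_sUnion_countable
    (compl '' {S : Set X | IsClosed S ∧ μ Sᶜ = 0})
    (by rintro _ ⟨S, ⟨hS, -⟩, rfl⟩; exact hS.isOpen_compl)
  rw [hcompl, ← hTeq, measure_sUnion_null_iff hT]
  intro s hs
  obtain ⟨S, ⟨-, hS⟩, rfl⟩ := hTsub hs
  exact hS

lemma msupport_nonempty [SecondCountableTopology X] (μ : Measure X) [NeZero μ] :
    (msupport μ).Nonempty := by
  by_contra hempty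
  have h := measure_compl_msupport μ
  rw [not_nonempty_iff_eq_empty.1 hempty, compl_empty, Measure.measure_univ_eq_zero] at h
  exact NeZero.ne μ h

end Support

section Transport

variable {X : Type*} [PseudoMetricSpace X] [MeasurableSpace X] [OpensMeasurableSpace X]

lemma ae_snd_mem_msupport [SecondCountableTopology X] {γ : Measure (X × X)} {ν : Measure X}
    {c : ℝ≥0∞} (hγ : γ.map Prod.snd ≤ c • ν) : ∀ᵐ z ∂γ, z.2 ∈ msupport ν := by
  have hmeas : MeasurableSet (msupport ν)ᶜ := (isClosed_msupport ν).isOpen_compl.measurableSet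
  have hmap : γ.map Prod.snd (msupport ν)ᶜ = 0 := by
    simpa [measure_compl_msupport ν] using hγ (msupport ν)ᶜ
  rw [Measure.map_apply measurable_snd hmeas] at hmap
  exact ae_iff.2 hmap

lemma lintegral_infDist_msupport_le_DWbeta [SecondCountableTopology X] (β : ℝ)
    (μ ν : Measure X) :
    ∫⁻ x, ENNReal.ofReal (infDist x (msupport ν)) ∂μ ≤ DWbeta β μ ν := by
  refine le_iInf₂ fun γ ⟨hfst, hsnd⟩ => ?_
  have hmeas : Measurable fun x => ENNReal.ofReal (infDist x (msupport ν)) :=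
    (continuous_infDist_pt _).measurable.ennreal_ofReal
  calc ∫⁻ x, ENNReal.ofReal (infDist x (msupport ν)) ∂μ
      = ∫⁻ z, ENNReal.ofReal (infDist z.1 (msupport ν)) ∂γ := by
        rw [← hfst, lintegral_map hmeas measurable_fst]
    _ ≤ ∫⁻ z, ENNReal.ofReal (dist z.1 z.2) ∂γ := by
        refine lintegral_mono_ae ?_
        filter_upwards [ae_snd_mem_msupport hsnd] with z hz
        exact ENNReal.ofReal_le_ofReal (infDist_le_dist_of_mem hz)

lemma msupport_subset_of_lintegral_infDist_eq_zero [SecondCountableTopology X]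
    {μ ν : Measure X} [NeZero ν]
    (h : ∫⁻ x, ENNReal.ofReal (infDist x (msupport ν)) ∂μ = 0) :
    msupport μ ⊆ msupport ν := by
  have hmeas : Measurable fun x => ENNReal.ofReal (infDist x (msupport ν)) :=
    (continuous_infDist_pt _).measurable.ennreal_ofReal
  have hmem : ∀ᵐ x ∂μ, x ∈ msupport ν := by
    filter_upwards [(lintegral_eq_zero_iff hmeas).1 h] with x hx
    refine ((isClosed_msupport ν).mem_iff_infDist_zero (msupport_nonempty ν)).2 ?_
    exact le_antisymm (ENNReal.ofReal_eq_zero.1 hx) infDist_nonneg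
  exact msupport_subset_of_isClosed (isClosed_msupport ν) (ae_iff.1 hmem)

end Transport

theorem relaxed_alignment_implies_support_alignment_general (n : ℕ)
    (p q : Measure (EuclideanSpace ℝ (Fin n)))
    [IsProbabilityMeasure p] [IsProbabilityMeasure q]
    (β₁ β₂ : ℝ)
    (h : DWsym β₁ β₂ p q = 0) :
    Dtri p q = 0 ∧ msupport p = msupport q := by
  obtain ⟨hpq, hqp⟩ := add_eq_zero.1 h
  have hp : ∫⁻ x, ENNReal.ofReal (infDist x (msupport q)) ∂p = 0 :=
    nonpos_iff_eq_zero.1 (hpq ▸ lintegral_infDist_msupport_le_DWbeta β₁ p q)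
  have hq : ∫⁻ x, ENNReal.ofReal (infDist x (msupport p)) ∂q = 0 :=
    nonpos_iff_eq_zero.1 (hqp ▸ lintegral_infDist_msupport_le_DWbeta β₂ q p)
  refine ⟨by simp [Dtri, hp, hq], ?_⟩
  exact (msupport_subset_of_lintegral_infDist_eq_zero hp).antisymm
    (msupport_subset_of_lintegral_infDist_eq_zero hq)

/-- **Proposition 4, part 2.** If the symmetrized (β₁, β₂)-admissible
Wasserstein distance vanishes for some finite β₁, β₂ > 0, then the SSD divergence vanishes,
i.e. the supports coincide. -/
theorem relaxed_alignment_implies_support_alignment (n : ℕ)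
    (p q : Measure (EuclideanSpace ℝ (Fin n)))
    [IsProbabilityMeasure p] [IsProbabilityMeasure q]
    (β₁ β₂ : ℝ) (hβ₁ : 0 < β₁) (hβ₂ : 0 < β₂)
    (h : DWsym β₁ β₂ p q = 0) :
    Dtri p q = 0 ∧ msupport p = msupport q :=
  relaxed_alignment_implies_support_alignment_general n p q β₁ β₂ h
end
end

section
/- For every pair of finite numbers β1, β2 > 0, there exist Borel probability measures p and q on ℝ (which can be taken supported on two points) such that D_W^{β1,β2}(p, q) = 0 but p ≠ q, and hence the Wasserstein-1 distance D_W(p, q) is strictly positive. -/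
/-!
If `p ≤ (1 + β) • q`, the diagonal coupling of `p` with itself is `β`-admissible for `(p, q)`
and costs nothing. The two-point measures `p = t δ₀ + (1 - t) δ₁` and `q = ½ δ₀ + ½ δ₁` with
`t = (1 + β) / (2 + β)`, `β = min β₁ β₂`, dominate each other up to the factor `1 + β`, so
`D_W^{β₁,β₂}(p, q) = 0`. On the other hand the 1-Lipschitz function `x ↦ |x - 1|` has integrals
`t` and `½` against them, so `D_W(p, q) ≥ t - ½ > 0`.
-/

open MeasureTheory Metric Set
open scoped ENNReal

noncomputable section

section Coupling

variable {X : Type*} [MeasurableSpace X]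

lemma map_fst_map_diag (p : Measure X) : (p.map fun x => (x, x)).map Prod.fst = p :=
  (Measure.fst_map_prodMk measurable_id).trans Measure.map_id

lemma map_snd_map_diag (p : Measure X) : (p.map fun x => (x, x)).map Prod.snd = p :=
  (Measure.snd_map_prodMk measurable_id).trans Measure.map_id

variable [PseudoMetricSpace X]

lemma lintegral_dist_map_diag (p : Measure X) :
    ∫⁻ z, ENNReal.ofReal (dist z.1 z.2) ∂(p.map fun x => (x, x)) = 0 :=
  le_antisymm ((lintegral_map_le _ _).trans_eq (by simp)) bot_le

lemma DW_self (p : Measure X) : DW p p = 0 :=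
  le_antisymm
    ((iInf₂_le _ ⟨map_fst_map_diag p, map_snd_map_diag p⟩).trans_eq (lintegral_dist_map_diag p))
    bot_le

lemma DWbeta_eq_zero_of_le_smul {β : ℝ} {p q : Measure X}
    (hpq : p ≤ ENNReal.ofReal (1 + β) • q) : DWbeta β p q = 0 :=
  le_antisymm
    ((iInf₂_le _ ⟨map_fst_map_diag p, (map_snd_map_diag p).trans_le hpq⟩).trans_eq
      (lintegral_dist_map_diag p))
    bot_le

/-- The easy half of Kantorovich–Rubinstein duality. -/
lemma lintegral_sub_lintegral_le_DW [OpensMeasurableSpace X] {f : X → ℝ}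
    (hf : LipschitzWith 1 f) (p q : Measure X) :
    ∫⁻ x, ENNReal.ofReal (f x) ∂p - ∫⁻ x, ENNReal.ofReal (f x) ∂q ≤ DW p q := by
  have hfm : Measurable f := hf.continuous.measurable
  refine le_iInf₂ fun γ ⟨hγp, hγq⟩ => tsub_le_iff_left.2 ?_
  have hpoint (z : X × X) : ENNReal.ofReal (f z.1) ≤
      ENNReal.ofReal (f z.2) + ENNReal.ofReal (dist z.1 z.2) := by
    have h : f z.1 - f z.2 ≤ dist z.1 z.2 :=
      (le_abs_self _).trans (by simpa [Real.dist_eq] using hf.dist_le_mul z.1 z.2)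
    exact (ENNReal.ofReal_le_ofReal (by linarith)).trans ENNReal.ofReal_add_le
  calc ∫⁻ x, ENNReal.ofReal (f x) ∂p
      = ∫⁻ z, ENNReal.ofReal (f z.1) ∂γ := by
        rw [← hγp, lintegral_map hfm.ennreal_ofReal measurable_fst]
    _ ≤ ∫⁻ z, (ENNReal.ofReal (f z.2) + ENNReal.ofReal (dist z.1 z.2)) ∂γ := lintegral_mono hpoint
    _ = ∫⁻ x, ENNReal.ofReal (f x) ∂q + ∫⁻ z, ENNReal.ofReal (dist z.1 z.2) ∂γ := by
      rw [lintegral_add_left (by fun_prop), ← hγq, lintegral_map hfm.ennreal_ofReal measurable_snd]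

end Coupling

section TwoPoint

variable {X : Type*} [MeasurableSpace X]

def twoPointMeasure (x y : X) (t : ℝ) : Measure X :=
  ENNReal.ofReal t • Measure.dirac x + ENNReal.ofReal (1 - t) • Measure.dirac y

lemma isProbabilityMeasure_twoPointMeasure (x y : X) {t : ℝ} (ht₀ : 0 ≤ t) (ht₁ : t ≤ 1) :
    IsProbabilityMeasure (twoPointMeasure x y t) := by
  constructor
  simp [twoPointMeasure, ← ENNReal.ofReal_add ht₀ (sub_nonneg.2 ht₁)]

lemma twoPointMeasure_le_smul (x y : X) {s t c : ℝ} (hc : 0 ≤ c)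
    (hx : s ≤ c * t) (hy : 1 - s ≤ c * (1 - t)) :
    twoPointMeasure x y s ≤ ENNReal.ofReal c • twoPointMeasure x y t := by
  rw [twoPointMeasure, twoPointMeasure, smul_add, smul_smul, smul_smul,
    ← ENNReal.ofReal_mul hc, ← ENNReal.ofReal_mul hc]
  gcongr

lemma lintegral_twoPointMeasure (x y : X) (t : ℝ) {g : X → ℝ≥0∞} (hg : Measurable g) :
    ∫⁻ z, g z ∂twoPointMeasure x y t = ENNReal.ofReal t * g x + ENNReal.ofReal (1 - t) * g y := by
  simp only [twoPointMeasure, lintegral_add_measure, lintegral_smul_measure,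
    lintegral_dirac' _ hg, smul_eq_mul]

lemma ofReal_mul_dist_le_DW_twoPointMeasure [PseudoMetricSpace X] [OpensMeasurableSpace X]
    (x y : X) (s : ℝ) {t : ℝ} (ht : 0 ≤ t) :
    ENNReal.ofReal ((s - t) * dist x y) ≤ DW (twoPointMeasure x y s) (twoPointMeasure x y t) := by
  have hg : Measurable fun z => ENNReal.ofReal (dist z y) :=
    (continuous_id.dist continuous_const).measurable.ennreal_ofReal
  have hint : ∀ r, ∫⁻ z, ENNReal.ofReal (dist z y) ∂twoPointMeasure x y r =
      ENNReal.ofReal r * ENNReal.ofReal (dist x y) := fun r => by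
    simp [lintegral_twoPointMeasure x y r hg]
  have h := lintegral_sub_lintegral_le_DW (LipschitzWith.dist_left y)
    (twoPointMeasure x y s) (twoPointMeasure x y t)
  rwa [hint, hint, ← ENNReal.ofReal_mul' dist_nonneg, ← ENNReal.ofReal_mul' dist_nonneg,
    ← ENNReal.ofReal_sub _ (by positivity), ← sub_mul] at h

end TwoPoint

/-- **Proposition 4, part 3a.** For any finite β₁, β₂ > 0 there are
probability measures on ℝ with `D_W^{β₁,β₂}(p, q) = 0` but `p ≠ q`, hence `D_W(p, q) > 0`. -/
theorem relaxed_alignment_not_distribution_alignment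
    (β₁ β₂ : ℝ) (hβ₁ : 0 < β₁) (hβ₂ : 0 < β₂) :
    ∃ p q : Measure ℝ, IsProbabilityMeasure p ∧ IsProbabilityMeasure q ∧
      DWsym β₁ β₂ p q = 0 ∧ p ≠ q ∧ 0 < DW p q := by
  set β := min β₁ β₂
  have hβ : 0 < β := lt_min hβ₁ hβ₂
  set t := (1 + β) / (2 + β)
  have ht : 1 / 2 < t ∧ t < 1 := by
    constructor
    · rw [lt_div_iff₀ (by positivity)]; linarith
    · rw [div_lt_one (by positivity)]; linarith
  set p := twoPointMeasure (0 : ℝ) 1 t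
  set q := twoPointMeasure (0 : ℝ) 1 (1 / 2)
  have htβ : t * (2 + β) = 1 + β := div_mul_cancel₀ _ (by positivity)
  have hββ₁ : β ≤ β₁ := min_le_left _ _
  have hββ₂ : β ≤ β₂ := min_le_right _ _
  have hpq : p ≤ ENNReal.ofReal (1 + β₁) • q :=
    twoPointMeasure_le_smul 0 1 (by linarith) (by nlinarith) (by nlinarith)
  have hqp : q ≤ ENNReal.ofReal (1 + β₂) • p :=
    twoPointMeasure_le_smul 0 1 (by linarith) (by nlinarith) (by nlinarith)
  have hpos : 0 < DW p q :=
    (ENNReal.ofReal_pos.2 (mul_pos (sub_pos.2 ht.1) (dist_pos.2 zero_ne_one))).trans_le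
      (ofReal_mul_dist_le_DW_twoPointMeasure 0 1 t (by norm_num))
  refine ⟨p, q, isProbabilityMeasure_twoPointMeasure 0 1 (by linarith) ht.2.le,
    isProbabilityMeasure_twoPointMeasure 0 1 (by norm_num) (by norm_num), ?_,
    fun h => hpos.ne' (h ▸ DW_self p), hpos⟩
  rw [DWsym, DWbeta_eq_zero_of_le_smul hpq, DWbeta_eq_zero_of_le_smul hqp, add_zero]
end
end

section
/- Let p and q be finite Borel measures on ℝ^n and let f: ℝ^n → [0, 1] be a measurable representative of the Radon–Nikodym derivative of p with respect to p + q. Then for every Borel set A ⊆ [0, 1], (f♯p)(A) = ∫_A t d[f♯(p+q)](t); that is, the identity function t ↦ t is a representative of the Radon–Nikodym derivative of f♯p with respect to f♯(p+q) = f♯p + f♯q. -/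
open MeasureTheory Metric Set
open scoped ENNReal

noncomputable section

/-- **Proposition 6.** If `f` is a `[0,1]`-valued representative of the
Radon–Nikodym derivative `dp/d(p+q)`, then for every Borel `A ⊆ [0, 1]`,
`(f♯p)(A) = ∫_A t d[f♯(p+q)](t)`: the identity is a density of `f♯p` w.r.t. `f♯(p+q)`. -/
theorem pushforward_density_is_identity (n : ℕ)
    (p q : Measure (EuclideanSpace ℝ (Fin n)))
    [IsFiniteMeasure p] [IsFiniteMeasure q]
    (f : EuclideanSpace ℝ (Fin n) → ℝ) (hf_meas : Measurable f)
    (hf_range : ∀ x, f x ∈ Set.Icc (0 : ℝ) 1)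
    (hf_rn : p = (p + q).withDensity (fun x => ENNReal.ofReal (f x))) :
    ∀ A : Set ℝ, MeasurableSet A → A ⊆ Set.Icc (0 : ℝ) 1 →
      (p.map f) A = ∫⁻ t in A, ENNReal.ofReal t ∂((p + q).map f) := by
  intro A hA _
  rw [Measure.map_apply hf_meas hA,
    setLIntegral_map hA ENNReal.measurable_ofReal hf_meas]
  conv_lhs => rw [hf_rn]
  rw [withDensity_apply _ (hf_meas hA)]
end
end

section
/- Let m ≥ 1 and let β be a nonnegative integer. Let Γ_β be the set of m × m matrices γ with nonnegative real entries such that every row sum equals 1 and every column sum is at most 1 + β. Then Γ_β equals the convex hull of the set of matrices in Γ_β all of whose entries lie in {0, 1}. -/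
open MeasureTheory Metric Set
open scoped ENNReal

noncomputable section

/-- The polytope `Γ_β` of m × m matrices with nonnegative entries, row sums equal to 1, and
column sums at most `1 + β`. -/
def GammaBeta (m : ℕ) (β : ℕ) : Set (Matrix (Fin m) (Fin m) ℝ) :=
  {γ | (∀ i j, 0 ≤ γ i j) ∧ (∀ i, ∑ j, γ i j = 1) ∧ (∀ j, ∑ i, γ i j ≤ 1 + (β : ℝ))}

/-!
Replace every column `j` by `β + 1` copies and add `m * β` filler rows: spreading `γ i j` evenly
over the copies of column `j` in row `(i, 0)` and letting the filler rows make up the deficit of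
every column copy turns `γ ∈ Γ_β` into a doubly stochastic matrix whose row `(i, 0)`, summed over
the copies of each column, gives back `γ`. By Birkhoff–von Neumann the lift is a convex
combination of permutation matrices, and summing over copies is linear and sends a permutation
matrix to a 0–1 matrix with unit row sums in which each column is hit at most `β + 1` times, i.e.
to a hard assignment in `Γ_β`. The other inclusion is the convexity of `Γ_β`.
-/

open Finset

section Collapse

variable {n k : Type*} [Fintype k]

def collapse (k₀ : k) : Matrix (n × k) (n × k) ℝ →ₗ[ℝ] Matrix n n ℝ where
  toFun M := Matrix.of fun i j => ∑ l, M (i, k₀) (j, l)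
  map_add' M N := by ext i j; simp [sum_add_distrib]
  map_smul' c M := by ext i j; simp [mul_sum]

lemma collapse_apply (k₀ : k) (M : Matrix (n × k) (n × k) ℝ) (i j : n) :
    collapse k₀ M i j = ∑ l, M (i, k₀) (j, l) :=
  rfl

variable [DecidableEq n]

lemma card_filter_fst_perm_eq_le [Fintype n] (k₀ : k) (σ : Equiv.Perm (n × k)) (j : n) :
    #{i | (σ (i, k₀)).1 = j} ≤ Fintype.card k := by
  refine card_le_card_of_injOn (fun i => (σ (i, k₀)).2) (fun _ _ => mem_coe.2 (mem_univ _)) ?_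
  intro a ha b hb hab
  simpa using σ.injective (Prod.ext ((mem_filter.1 ha).2.trans (mem_filter.1 hb).2.symm) hab)

variable [DecidableEq k]

lemma collapse_permMatrix_apply (k₀ : k) (σ : Equiv.Perm (n × k)) (i j : n) :
    collapse k₀ (σ.permMatrix ℝ) i j = if (σ (i, k₀)).1 = j then 1 else 0 := by
  by_cases h : (σ (i, k₀)).1 = j <;> simp [collapse_apply, PEquiv.toMatrix_apply, Prod.ext_iff, h]

end Collapse

lemma convex_gammaBeta (m β : ℕ) : Convex ℝ (GammaBeta m β) := by
  rintro x ⟨hx0, hx1, hx2⟩ y ⟨hy0, hy1, hy2⟩ a b ha hb hab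
  refine ⟨fun i j => ?_, fun i => ?_, fun j => ?_⟩ <;>
    simp only [Matrix.add_apply, Matrix.smul_apply, smul_eq_mul, sum_add_distrib, ← mul_sum]
  · have := hx0 i j; have := hy0 i j; positivity
  · rw [hx1, hy1, mul_one, mul_one, hab]
  · calc a * ∑ i, x i j + b * ∑ i, y i j ≤ a * (1 + β) + b * (1 + β) := by
          gcongr <;> apply_assumption
      _ = 1 + β := by rw [← add_mul, hab, one_mul]

lemma collapse_permMatrix_mem_gammaBeta (m β : ℕ) (σ : Equiv.Perm (Fin m × Fin (β + 1))) :
    collapse 0 (σ.permMatrix ℝ) ∈ {γ ∈ GammaBeta m β | ∀ i j, γ i j = 0 ∨ γ i j = 1} := by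
  simp only [GammaBeta, Set.mem_ofPred_eq, collapse_permMatrix_apply]
  refine ⟨⟨fun i j => ?_, fun i => ?_, fun j => ?_⟩, fun i j => ?_⟩
  · split_ifs <;> norm_num
  · simp
  · have hcard := (card_filter_fst_perm_eq_le 0 σ j).trans (Fintype.card_fin _).le
    rw [sum_boole, add_comm (1 : ℝ)]
    exact_mod_cast hcard
  · split_ifs <;> simp

lemma sum_fin_succ_ite_zero {M : Type*} [AddCommMonoid M] (β : ℕ) (a c : M) :
    ∑ k : Fin (β + 1), (if k = 0 then a else c) = a + β • c := by
  simp [Fin.sum_univ_succ, Fin.succ_ne_zero]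

section BlowUp

variable {m : ℕ} (β : ℕ) (γ : Matrix (Fin m) (Fin m) ℝ)

def columnDeficit (j : Fin m) : ℝ :=
  1 - (∑ i, γ i j) / (β + 1)

/-- The rows `(i, k)` with `k ≠ 0` exist only when `m * β ≠ 0`; they share the deficit of each
column copy uniformly. -/
def blowUp : Matrix (Fin m × Fin (β + 1)) (Fin m × Fin (β + 1)) ℝ :=
  fun p q => if p.2 = 0 then γ p.1 q.1 / (β + 1) else columnDeficit β γ q.1 / (m * β)

lemma collapse_blowUp : collapse 0 (blowUp β γ) = γ := by
  ext i j
  simp only [collapse_apply, blowUp, ↓reduceIte, sum_const, card_univ, Fintype.card_fin,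
    nsmul_eq_mul, Nat.cast_add, Nat.cast_one]
  field_simp

variable {β γ}

lemma columnDeficit_nonneg (hγ : γ ∈ GammaBeta m β) (j : Fin m) : 0 ≤ columnDeficit β γ j := by
  have := hγ.2.2 j
  rw [columnDeficit, sub_nonneg, div_le_one (by positivity)]
  linarith

lemma sum_columnDeficit (hγ : γ ∈ GammaBeta m β) :
    ∑ j, columnDeficit β γ j = m * β / (β + 1) := by
  simp only [columnDeficit, sum_sub_distrib, ← sum_div]
  rw [sum_comm]
  simp only [hγ.2.1, sum_const, card_univ, Fintype.card_fin, nsmul_eq_mul, mul_one]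
  field_simp
  ring

lemma mul_columnDeficit_div (hγ : γ ∈ GammaBeta m β) (j : Fin m) :
    m * β * (columnDeficit β γ j / (m * β)) = columnDeficit β γ j := by
  by_cases h : (m * β : ℝ) = 0
  · have hsum := sum_columnDeficit hγ
    rw [h, zero_div] at hsum
    rw [(sum_eq_zero_iff_of_nonneg fun j _ => columnDeficit_nonneg hγ j).1 hsum j (mem_univ j)]
    simp
  · exact mul_div_cancel₀ _ h

lemma blowUp_mem_doublyStochastic (hγ : γ ∈ GammaBeta m β) :
    blowUp β γ ∈ doublyStochastic ℝ _ := by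
  rw [mem_doublyStochastic_iff_sum]
  refine ⟨fun p q => ?_, fun ⟨i, k⟩ => ?_, fun ⟨j, l⟩ => ?_⟩
  · unfold blowUp
    have := hγ.1 p.1 q.1
    have := columnDeficit_nonneg hγ q.1
    split_ifs <;> positivity
  · rw [Fintype.sum_prod_type]
    by_cases hk : k = 0
    · simp only [blowUp, hk, ↓reduceIte, sum_const, card_univ, Fintype.card_fin, nsmul_eq_mul,
        Nat.cast_add, Nat.cast_one, ← mul_sum, ← sum_div, hγ.2.1 i]
      field_simp
    · have hβ : (β : ℝ) ≠ 0 :=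
        Nat.cast_ne_zero.2 (by rintro rfl; exact hk (Fin.ext (Nat.lt_one_iff.1 k.is_lt)))
      have hm : (m : ℝ) ≠ 0 := Nat.cast_ne_zero.2 i.pos.ne'
      simp only [blowUp, hk, ↓reduceIte, sum_const, card_univ, Fintype.card_fin, nsmul_eq_mul,
        Nat.cast_add, Nat.cast_one, ← mul_sum, ← sum_div, sum_columnDeficit hγ]
      field_simp
  · simp only [Fintype.sum_prod_type, blowUp, sum_fin_succ_ite_zero, sum_add_distrib, sum_const,
      card_univ, Fintype.card_fin, nsmul_eq_mul, ← sum_div]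
    rw [← mul_assoc, mul_columnDeficit_div hγ j, columnDeficit]
    ring

end BlowUp

theorem gammaBeta_eq_convexHull_hard_assignments_general (m : ℕ) (β : ℕ) :
    GammaBeta m β =
      convexHull ℝ {γ ∈ GammaBeta m β | ∀ i j, γ i j = 0 ∨ γ i j = 1} := by
  refine Set.Subset.antisymm (fun γ hγ => ?_)
    ((convex_gammaBeta m β).convexHull_subset_iff.2 (Set.sep_subset _ _))
  have hlift : blowUp β γ ∈ convexHull ℝ {σ.permMatrix ℝ | σ : Equiv.Perm _} := by
    rw [← doublyStochastic_eq_convexHull_permMatrix]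
    exact blowUp_mem_doublyStochastic hγ
  rw [← collapse_blowUp β γ]
  have himage := (collapse (0 : Fin (β + 1))).image_convexHull _ ▸ Set.mem_image_of_mem _ hlift
  refine convexHull_mono ?_ himage
  rintro _ ⟨_, ⟨σ, rfl⟩, rfl⟩
  exact collapse_permMatrix_mem_gammaBeta m β σ

/-- **generalized Birkhoff–von Neumann.** `Γ_β` is the convex hull of its 0–1
(hard-assignment) matrices. -/
theorem gammaBeta_eq_convexHull_hard_assignments (m : ℕ) (hm : 1 ≤ m) (β : ℕ) :
    GammaBeta m β =
      convexHull ℝ {γ ∈ GammaBeta m β | ∀ i j, γ i j = 0 ∨ γ i j = 1} :=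
  gammaBeta_eq_convexHull_hard_assignments_general m β
end
end

section
/- Let m ≥ 1, let β be a nonnegative integer, and let c be an arbitrary m × m real matrix. Let Γ_β be the set of m × m matrices γ with nonnegative real entries such that every row sum equals 1 and every column sum is at most 1 + β. Then there exists γ* ∈ Γ_β all of whose entries lie in {0, 1} such that ∑_{i,j} γ*_{ij} c_{ij} ≤ ∑_{i,j} γ_{ij} c_{ij} for every γ ∈ Γ_β; i.e., the linear cost ∑_{i,j} γ_{ij} c_{ij} attains its minimum over Γ_β at a hard-assignment (0–1) matrix. -/
open MeasureTheory Metric Set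
open scoped ENNReal

noncomputable section

lemma my_sum_ite_zero {N : ℕ} (x y : ℝ) :
    ∑ k : Fin (N+1), (if k = 0 then x else y) = x + N * y := by
  have h : ∀ k : Fin (N+1), (if k = 0 then x else y) = y + (if k = 0 then x - y else 0) := by
    intro k; split <;> ring
  simp only [h, Finset.sum_add_distrib, Finset.sum_const, Finset.sum_ite_eq',
    Finset.mem_univ, if_pos, Finset.card_univ, Fintype.card_fin, nsmul_eq_mul]
  push_cast; ring

lemma my_perm_cost {n : Type*} [Fintype n] [DecidableEq n] (C : Matrix n n ℝ)
    (σ : Equiv.Perm n) :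
    ∑ a, ∑ b, (σ.permMatrix ℝ) a b * C a b = ∑ a, C a (σ a) := by
  have h : ∀ a b, (σ.permMatrix ℝ) a b = if σ a = b then 1 else 0 := by
    intro a b
    simp [Equiv.Perm.permMatrix, PEquiv.toMatrix_apply, Equiv.toPEquiv_apply, eq_comm]
  simp only [h, ite_mul, one_mul, zero_mul]
  exact Finset.sum_congr rfl fun a _ => by rw [Finset.sum_ite_eq Finset.univ (σ a) (C a)]; simp

lemma my_birkhoff_bound {n : Type*} [Fintype n] [DecidableEq n] (C M : Matrix n n ℝ)
    (hM : M ∈ doublyStochastic ℝ n) (v : ℝ)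
    (hv : ∀ σ : Equiv.Perm n, v ≤ ∑ a, ∑ b, (σ.permMatrix ℝ) a b * C a b) :
    v ≤ ∑ a, ∑ b, M a b * C a b := by
  obtain ⟨w, hw0, hw1, hwM⟩ := exists_eq_sum_perm_of_mem_doublyStochastic hM
  have key : ∑ a, ∑ b, M a b * C a b
      = ∑ σ : Equiv.Perm n, w σ * ∑ a, ∑ b, (σ.permMatrix ℝ) a b * C a b := by
    rw [← hwM]
    simp only [Matrix.sum_apply, Matrix.smul_apply, smul_eq_mul, Finset.sum_mul,
      Finset.mul_sum, mul_assoc]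
    rw [show (∑ a, ∑ b, ∑ σ : Equiv.Perm n, w σ * ((σ.permMatrix ℝ) a b * C a b))
        = ∑ a, ∑ σ : Equiv.Perm n, ∑ b, w σ * ((σ.permMatrix ℝ) a b * C a b) from
      Finset.sum_congr rfl fun a _ => Finset.sum_comm]
    exact Finset.sum_comm
  rw [key]
  calc v = ∑ σ : Equiv.Perm n, w σ * v := by rw [← Finset.sum_mul, hw1, one_mul]
    _ ≤ _ := Finset.sum_le_sum fun σ _ => mul_le_mul_of_nonneg_left (hv σ) (hw0 σ)

lemma my_col_sum_one {m : ℕ} (γ : Matrix (Fin m) (Fin m) ℝ)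
    (hrow : ∀ i, ∑ j, γ i j = 1) (hcol : ∀ j, ∑ i, γ i j ≤ 1) (j : Fin m) :
    ∑ i, γ i j = 1 := by
  by_contra h
  have hlt : ∑ i, γ i j < 1 := lt_of_le_of_ne (hcol j) h
  have h1 : ∑ j' : Fin m, ∑ i, γ i j' < ∑ _j' : Fin m, (1:ℝ) :=
    Finset.sum_lt_sum (fun j' _ => hcol j') ⟨j, Finset.mem_univ j, hlt⟩
  have h2 : ∑ j' : Fin m, ∑ i, γ i j' = m := by rw [Finset.sum_comm]; simp [hrow]
  rw [h2] at h1
  simp at h1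

lemma my_key (m β : ℕ) (hm : 1 ≤ m) (c : Matrix (Fin m) (Fin m) ℝ)
    (γ : Matrix (Fin m) (Fin m) ℝ) (hγ : γ ∈ GammaBeta m β)
    (C : Matrix (Fin m × Fin (β+1)) (Fin m × Fin (β+1)) ℝ)
    (hC : C = fun a b => if a.2 = 0 then c a.1 b.1 else 0)
    (v : ℝ)
    (hv : ∀ σ : Equiv.Perm (Fin m × Fin (β+1)),
      v ≤ ∑ a, ∑ b, (σ.permMatrix ℝ) a b * C a b) :
    v ≤ ∑ i, ∑ j, γ i j * c i j := by
  obtain ⟨hpos, hrow, hcol⟩ := hγ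
  have hb1 : ((β:ℝ)+1) ≠ 0 := by positivity
  have hcol' : ∀ j, ∑ i, γ i j ≤ (β:ℝ)+1 := fun j => by
    have := hcol j; linarith
  have hsum : ∑ j, ∑ i, γ i j = (m:ℝ) := by rw [Finset.sum_comm]; simp [hrow]
  set B : Matrix (Fin m × Fin (β+1)) (Fin m × Fin (β+1)) ℝ :=
    fun a b => if a.2 = 0 then γ a.1 b.1 / ((β:ℝ)+1)
      else (1 - (∑ i, γ i b.1) / ((β:ℝ)+1)) / ((m:ℝ)*(β:ℝ)) with hB
  have hBds : B ∈ doublyStochastic ℝ (Fin m × Fin (β+1)) := by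
    rw [mem_doublyStochastic_iff_sum]
    refine ⟨?_, ?_, ?_⟩
    · rintro ⟨i, k⟩ ⟨j, l⟩
      by_cases hk : k = 0
      · simp only [hB, hk, if_pos]
        exact div_nonneg (hpos _ _) (by positivity)
      · simp only [hB, if_neg hk]
        have h1 : 0 ≤ 1 - (∑ i, γ i j) / ((β:ℝ)+1) := by
          rw [sub_nonneg, div_le_one (by positivity)]
          exact hcol' j
        positivity
    · rintro ⟨i, k⟩
      rw [Fintype.sum_prod_type]
      by_cases hk : k = 0
      · simp only [hB, hk, if_pos, Finset.sum_const, Finset.card_univ, Fintype.card_fin,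
          nsmul_eq_mul]
        push_cast
        have : ∀ j, ((β:ℝ)+1) * (γ i j / ((β:ℝ)+1)) = γ i j := fun j => by
          field_simp
        simp only [this]
        exact hrow i
      · have hβ1 : 1 ≤ β := by
          by_contra hcon
          have hb0 : β = 0 := by omega
          subst hb0
          exact hk (Fin.ext (by have := k.isLt; omega))
        have hK : ((m:ℝ)*(β:ℝ)) ≠ 0 := by
          have h1 : (1:ℝ) ≤ (m:ℝ) := by exact_mod_cast hm
          have h2 : (1:ℝ) ≤ (β:ℝ) := by exact_mod_cast hβ1
          nlinarith
        simp only [hB, if_neg hk, Finset.sum_const, Finset.card_univ, Fintype.card_fin,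
          nsmul_eq_mul]
        push_cast
        rw [← Finset.mul_sum, ← Finset.sum_div, Finset.sum_sub_distrib, Finset.sum_const,
          Finset.card_univ, Fintype.card_fin, ← Finset.sum_div, hsum]
        field_simp
        ring_nf
    · rintro ⟨j, l⟩
      rw [Fintype.sum_prod_type]
      simp only [hB]
      rw [show (∑ i, ∑ k : Fin (β+1), if k = 0 then γ i j / ((β:ℝ)+1)
            else (1 - (∑ i', γ i' j) / ((β:ℝ)+1)) / ((m:ℝ)*(β:ℝ)))
          = ∑ i, (γ i j / ((β:ℝ)+1)
            + (β:ℝ) * ((1 - (∑ i', γ i' j) / ((β:ℝ)+1)) / ((m:ℝ)*(β:ℝ)))) from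
        Finset.sum_congr rfl fun i _ => my_sum_ite_zero _ _]
      rw [Finset.sum_add_distrib, ← Finset.sum_div, Finset.sum_const, Finset.card_univ,
        Fintype.card_fin, nsmul_eq_mul]
      rcases Nat.eq_zero_or_pos β with hb0 | hβ1
      · subst hb0
        have := my_col_sum_one γ hrow (fun j' => by have := hcol j'; push_cast at this ⊢; linarith) j
        push_cast
        rw [this]
        norm_num
      · have hK : ((m:ℝ)*(β:ℝ)) ≠ 0 := by
          have h1 : (1:ℝ) ≤ (m:ℝ) := by exact_mod_cast hm
          have h2 : (1:ℝ) ≤ (β:ℝ) := by exact_mod_cast hβ1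
          nlinarith
        field_simp
        ring
  have hBcost : ∑ a, ∑ b, B a b * C a b = ∑ i, ∑ j, γ i j * c i j := by
    have hterm : ∀ (i : Fin m) (k : Fin (β+1)) (j : Fin m) (l : Fin (β+1)),
        B (i,k) (j,l) * C (i,k) (j,l)
        = if k = 0 then γ i j / ((β:ℝ)+1) * c i j else 0 := by
      intro i k j l; by_cases hk : k = 0 <;> simp [hB, hC, hk]
    have hmul : ∀ x y : ℝ, ((β:ℝ)+1) * (x / ((β:ℝ)+1) * y) = x * y := by
      intro x y; field_simp
    calc (∑ a, ∑ b, B a b * C a b)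
        = ∑ i, ∑ k : Fin (β+1), ∑ j, ∑ l : Fin (β+1),
            (if k = 0 then γ i j / ((β:ℝ)+1) * c i j else 0) := by
          rw [Fintype.sum_prod_type]
          refine Finset.sum_congr rfl fun i _ => Finset.sum_congr rfl fun k _ => ?_
          rw [Fintype.sum_prod_type]
          exact Finset.sum_congr rfl fun j _ => Finset.sum_congr rfl fun l _ => hterm i k j l
      _ = ∑ i, ∑ k : Fin (β+1),
            (if k = 0 then ∑ j, ((β:ℝ)+1) * (γ i j / ((β:ℝ)+1) * c i j) else 0) := by
          refine Finset.sum_congr rfl fun i _ => Finset.sum_congr rfl fun k _ => ?_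
          by_cases hk : k = 0
          · simp only [hk, if_pos, Finset.sum_const, Finset.card_univ, Fintype.card_fin,
              nsmul_eq_mul]
            exact Finset.sum_congr rfl fun j _ => by push_cast; ring
          · simp [hk]
      _ = ∑ i, ∑ j, γ i j * c i j := by
          refine Finset.sum_congr rfl fun i _ => ?_
          simp only [Finset.sum_ite_eq', Finset.mem_univ, if_pos]
          exact Finset.sum_congr rfl fun j _ => hmul _ _
  rw [← hBcost]
  exact my_birkhoff_bound C B hBds v hv

/-- Any linear cost attains its minimum over `Γ_β` at a hard-assignment
(0–1) matrix. -/
theorem linear_cost_min_at_hard_assignment (m : ℕ) (hm : 1 ≤ m) (β : ℕ)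
    (c : Matrix (Fin m) (Fin m) ℝ) :
    ∃ γs ∈ GammaBeta m β, (∀ i j, γs i j = 0 ∨ γs i j = 1) ∧
      ∀ γ ∈ GammaBeta m β, ∑ i, ∑ j, γs i j * c i j ≤ ∑ i, ∑ j, γ i j * c i j := by
  classical
  set C : Matrix (Fin m × Fin (β+1)) (Fin m × Fin (β+1)) ℝ :=
    fun a b => if a.2 = 0 then c a.1 b.1 else 0 with hC
  obtain ⟨σ0, -, hσ0⟩ := Finset.exists_min_image
    (Finset.univ : Finset (Equiv.Perm (Fin m × Fin (β+1))))
    (fun σ => ∑ a, ∑ b, (σ.permMatrix ℝ) a b * C a b) ⟨Equiv.refl _, Finset.mem_univ _⟩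
  set v := ∑ a, ∑ b, (σ0.permMatrix ℝ) a b * C a b with hvdef
  have hv : ∀ σ : Equiv.Perm (Fin m × Fin (β+1)),
      v ≤ ∑ a, ∑ b, (σ.permMatrix ℝ) a b * C a b := fun σ => hσ0 σ (Finset.mem_univ σ)
  refine ⟨fun i j => if (σ0 (i, 0)).1 = j then 1 else 0, ⟨?_, ?_, ?_⟩, ?_, ?_⟩
  · intro i j; dsimp only; split <;> norm_num
  · intro i; simp
  · intro j
    have hsb : (∑ i, if (σ0 (i,0)).1 = j then (1:ℝ) else 0)
        = ((Finset.univ.filter fun i : Fin m => (σ0 (i,0)).1 = j).card : ℝ) := by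
      simp [Finset.sum_boole]
    rw [hsb]
    have hcard : (Finset.univ.filter fun i : Fin m => (σ0 (i,0)).1 = j).card
        ≤ (Finset.univ : Finset (Fin (β+1))).card := by
      apply Finset.card_le_card_of_injOn (fun i => (σ0 (i,0)).2) (fun _ _ => Finset.mem_univ _)
      intro i1 h1 i2 h2 h12
      simp only [Finset.coe_filter, Finset.mem_univ, true_and, Set.mem_setOf_eq] at h1 h2
      have he : σ0 (i1, 0) = σ0 (i2, 0) := Prod.ext (h1.trans h2.symm) h12
      exact congrArg Prod.fst (σ0.injective he)
    rw [Finset.card_univ, Fintype.card_fin] at hcard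
    have : ((Finset.univ.filter fun i : Fin m => (σ0 (i,0)).1 = j).card : ℝ) ≤ ((β+1 : ℕ) : ℝ) :=
      Nat.cast_le.mpr hcard
    push_cast at this ⊢
    linarith
  · intro i j; dsimp only; split <;> simp
  · intro γ hγ
    have hcost : (∑ i, ∑ j, (if (σ0 (i,0)).1 = j then (1:ℝ) else 0) * c i j) = v := by
      have h1 : ∀ i, ∑ j, (if (σ0 (i,0)).1 = j then (1:ℝ) else 0) * c i j
          = c i (σ0 (i,0)).1 := by
        intro i
        simp [ite_mul, Finset.sum_ite_eq]
      rw [hvdef, my_perm_cost]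
      rw [Fintype.sum_prod_type]
      simp only [hC, Finset.sum_ite_eq', Finset.mem_univ, if_pos]
      exact Finset.sum_congr rfl fun i _ => h1 i
    calc ∑ i, ∑ j, (if (σ0 (i,0)).1 = j then (1:ℝ) else 0) * c i j
        = v := hcost
      _ ≤ ∑ i, ∑ j, γ i j * c i j := my_key m β hm c γ hγ C hC v hv
end
end

section
/- Let μ be a σ-finite Borel measure on ℝ^n and let p and q be Borel probability measures absolutely continuous with respect to μ with density representatives ρ_p and ρ_q that are μ-almost everywhere strictly positive. Define g*(x) = log ρ_p(x) − log ρ_q(x). Then g* minimizes the logistic discriminator loss: for every measurable g: ℝ^n → ℝ, ∫ log(1 + e^{−g*(x)}) dp(x) + ∫ log(1 + e^{g*(x)}) dq(x) ≤ ∫ log(1 + e^{−g(x)}) dp(x) + ∫ log(1 + e^{g(x)}) dq(x). -/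
open MeasureTheory Metric Set
open scoped ENNReal

noncomputable section

/-!
Write `a, b > 0` for the two densities at a point and `s = σ(t)` for the sigmoid of the
discriminator's value there. The pointwise loss `a log(1 + e^{-t}) + b log(1 + e^t)` is the
binary cross-entropy `-(a log s + b log(1 - s))`, which by Gibbs' inequality is smallest at
`s = a / (a + b)`, that is, at `t = log a - log b`. Integrating this pointwise inequality
against `μ` gives the theorem; the integrands are nonnegative, so no integrability is needed.
-/

namespace Real

lemma log_one_add_exp_nonneg (t : ℝ) : 0 ≤ log (1 + exp t) :=
  log_nonneg (by linarith [exp_pos t])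

lemma log_one_add_exp_neg_eq (t : ℝ) : log (1 + exp (-t)) = -log (sigmoid t) := by
  rw [sigmoid_def, log_inv, neg_neg]

lemma log_one_add_exp_eq (t : ℝ) : log (1 + exp t) = -log (1 - sigmoid t) := by
  rw [← sigmoid_neg, ← log_one_add_exp_neg_eq, neg_neg]

lemma sigmoid_log_sub_log {a b : ℝ} (ha : 0 < a) (hb : 0 < b) :
    sigmoid (log a - log b) = a / (a + b) := by
  rw [sigmoid_def, neg_sub, exp_sub, exp_log ha, exp_log hb]
  field_simp

lemma mul_log_add_mul_log_one_sub_le {a b s : ℝ} (ha : 0 < a) (hb : 0 < b) (hs₀ : 0 < s)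
    (hs₁ : s < 1) :
    a * log s + b * log (1 - s) ≤ a * log (a / (a + b)) + b * log (b / (a + b)) := by
  have hab : 0 < a + b := by linarith
  have hterm : ∀ {c x : ℝ}, 0 < c → 0 < x →
      c * (log x - log (c / (a + b))) ≤ x * (a + b) - c := fun {c x} hc hx => by
    rw [← log_div hx.ne' (by positivity)]
    calc c * log (x / (c / (a + b))) ≤ c * (x / (c / (a + b)) - 1) :=
          mul_le_mul_of_nonneg_left (log_le_sub_one_of_pos (by positivity)) hc.le
      _ = x * (a + b) - c := by field_simp
  nlinarith [hterm ha hs₀, hterm hb (sub_pos.2 hs₁)]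

end Real

open Real

def logisticRisk (a b t : ℝ) : ℝ := a * log (1 + exp (-t)) + b * log (1 + exp t)

lemma logisticRisk_log_sub_log_le {a b : ℝ} (ha : 0 < a) (hb : 0 < b) (t : ℝ) :
    logisticRisk a b (log a - log b) ≤ logisticRisk a b t := by
  have hcrossEntropy : ∀ t,
      logisticRisk a b t = -(a * log (sigmoid t) + b * log (1 - sigmoid t)) := fun t => by
    rw [logisticRisk, log_one_add_exp_neg_eq, log_one_add_exp_eq]; ring
  have hcompl : 1 - a / (a + b) = b / (a + b) := by field_simp; ring
  rw [hcrossEntropy, hcrossEntropy, sigmoid_log_sub_log ha hb, hcompl, neg_le_neg_iff]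
  exact mul_log_add_mul_log_one_sub_le ha hb (sigmoid_pos t) (sigmoid_lt_one t)

lemma lintegral_withDensity_ofReal_add_lintegral_withDensity_ofReal {α : Type*}
    [MeasurableSpace α] (μ : Measure α) {ρ₁ ρ₂ u₁ u₂ : α → ℝ} (hρ₁ : Measurable ρ₁)
    (hρ₂ : Measurable ρ₂) (hρ₁_nonneg : ∀ᵐ x ∂μ, 0 ≤ ρ₁ x) (hρ₂_nonneg : ∀ᵐ x ∂μ, 0 ≤ ρ₂ x)
    (hu₁ : Measurable u₁) (hu₂ : Measurable u₂) (hu₁_nonneg : ∀ x, 0 ≤ u₁ x)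
    (hu₂_nonneg : ∀ x, 0 ≤ u₂ x) :
    ∫⁻ x, ENNReal.ofReal (u₁ x) ∂μ.withDensity (fun x => ENNReal.ofReal (ρ₁ x)) +
        ∫⁻ x, ENNReal.ofReal (u₂ x) ∂μ.withDensity (fun x => ENNReal.ofReal (ρ₂ x)) =
      ∫⁻ x, ENNReal.ofReal (ρ₁ x * u₁ x + ρ₂ x * u₂ x) ∂μ := by
  rw [lintegral_withDensity_eq_lintegral_mul _ (by fun_prop) (by fun_prop),
    lintegral_withDensity_eq_lintegral_mul _ (by fun_prop) (by fun_prop),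
    ← lintegral_add_left (by fun_prop)]
  refine lintegral_congr_ae ?_
  filter_upwards [hρ₁_nonneg, hρ₂_nonneg] with x h₁ h₂
  rw [ENNReal.ofReal_add (mul_nonneg h₁ (hu₁_nonneg x)) (mul_nonneg h₂ (hu₂_nonneg x)),
    ENNReal.ofReal_mul h₁, ENNReal.ofReal_mul h₂, Pi.mul_apply, Pi.mul_apply]

theorem log_density_ratio_minimizes_logistic_loss_general (n : ℕ)
    (μ : Measure (EuclideanSpace ℝ (Fin n)))
    (p q : Measure (EuclideanSpace ℝ (Fin n)))
    (ρp ρq : EuclideanSpace ℝ (Fin n) → ℝ)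
    (hρp_meas : Measurable ρp) (hρq_meas : Measurable ρq)
    (hp : p = μ.withDensity (fun x => ENNReal.ofReal (ρp x)))
    (hq : q = μ.withDensity (fun x => ENNReal.ofReal (ρq x)))
    (hρp_pos : ∀ᵐ x ∂μ, 0 < ρp x) (hρq_pos : ∀ᵐ x ∂μ, 0 < ρq x)
    (gstar : EuclideanSpace ℝ (Fin n) → ℝ)
    (hgstar : ∀ x, gstar x = Real.log (ρp x) - Real.log (ρq x)) :
    ∀ g : EuclideanSpace ℝ (Fin n) → ℝ, Measurable g →
      (∫⁻ x, ENNReal.ofReal (Real.log (1 + Real.exp (-(gstar x)))) ∂p) +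
        (∫⁻ x, ENNReal.ofReal (Real.log (1 + Real.exp (gstar x))) ∂q) ≤
      (∫⁻ x, ENNReal.ofReal (Real.log (1 + Real.exp (-(g x)))) ∂p) +
        (∫⁻ x, ENNReal.ofReal (Real.log (1 + Real.exp (g x))) ∂q) := by
  intro g hg
  obtain rfl : gstar = fun x => log (ρp x) - log (ρq x) := funext hgstar
  have hloss : ∀ f : EuclideanSpace ℝ (Fin n) → ℝ, Measurable f →
      (∫⁻ x, ENNReal.ofReal (log (1 + exp (-(f x)))) ∂p) +
        (∫⁻ x, ENNReal.ofReal (log (1 + exp (f x))) ∂q) =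
      ∫⁻ x, ENNReal.ofReal (logisticRisk (ρp x) (ρq x) (f x)) ∂μ := fun f hf => by
    rw [hp, hq]
    exact lintegral_withDensity_ofReal_add_lintegral_withDensity_ofReal μ hρp_meas hρq_meas
      (hρp_pos.mono fun _ => le_of_lt) (hρq_pos.mono fun _ => le_of_lt) (by fun_prop)
      (by fun_prop) (fun _ => log_one_add_exp_nonneg _) (fun _ => log_one_add_exp_nonneg _)
  rw [hloss _ (by fun_prop), hloss g hg]
  refine lintegral_mono_ae ?_
  filter_upwards [hρp_pos, hρq_pos] with x hpx hqx
  exact ENNReal.ofReal_le_ofReal (logisticRisk_log_sub_log_le hpx hqx (g x))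

/-- The log-density-ratio `g*(x) = log ρ_p(x) − log ρ_q(x)` minimizes the
logistic discriminator loss among all measurable discriminators. -/
theorem log_density_ratio_minimizes_logistic_loss (n : ℕ)
    (μ : Measure (EuclideanSpace ℝ (Fin n))) [SigmaFinite μ]
    (p q : Measure (EuclideanSpace ℝ (Fin n)))
    [IsProbabilityMeasure p] [IsProbabilityMeasure q]
    (ρp ρq : EuclideanSpace ℝ (Fin n) → ℝ)
    (hρp_meas : Measurable ρp) (hρq_meas : Measurable ρq)
    (hp : p = μ.withDensity (fun x => ENNReal.ofReal (ρp x)))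
    (hq : q = μ.withDensity (fun x => ENNReal.ofReal (ρq x)))
    (hρp_pos : ∀ᵐ x ∂μ, 0 < ρp x) (hρq_pos : ∀ᵐ x ∂μ, 0 < ρq x)
    (gstar : EuclideanSpace ℝ (Fin n) → ℝ)
    (hgstar : ∀ x, gstar x = Real.log (ρp x) - Real.log (ρq x)) :
    ∀ g : EuclideanSpace ℝ (Fin n) → ℝ, Measurable g →
      (∫⁻ x, ENNReal.ofReal (Real.log (1 + Real.exp (-(gstar x)))) ∂p) +
        (∫⁻ x, ENNReal.ofReal (Real.log (1 + Real.exp (gstar x))) ∂q) ≤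
      (∫⁻ x, ENNReal.ofReal (Real.log (1 + Real.exp (-(g x)))) ∂p) +
        (∫⁻ x, ENNReal.ofReal (Real.log (1 + Real.exp (g x))) ∂q) :=
  log_density_ratio_minimizes_logistic_loss_general n μ p q ρp ρq hρp_meas hρq_meas hp hq hρp_pos
    hρq_pos gstar hgstar
end
end
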